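/- Let F be a nonempty finite set of positive integers. With the greedy decomposition operators E_i, F ∈ S₂ if and only if E_{min F + 1}(F) = ∅. -/

import Mathlib

open Finset

/-- `F < G` for finite sets: every element of `F` is below every element of `G`. -/
def FinsetLT (F G : Finset ℕ) : Prop := ∀ x ∈ F, ∀ y ∈ G, x < y

/-- Membership in the Schreier family `S₁`: a finite set of positive integers
with `|F| ≤ min F` (the empty set belongs trivially). -/
def IsSchreier (F : Finset ℕ) : Prop := ∀ n ∈ F, 0 < n ∧ F.card ≤ n

/-- `F` is a union of at most `d` sets `F₁ < F₂ < ⋯`, each in the family `P`. -/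
def Combine (P : Finset ℕ → Prop) (d : ℕ) (F : Finset ℕ) : Prop :=
  ∃ L : List (Finset ℕ), L.length ≤ d ∧ L.Pairwise FinsetLT ∧
    (∀ G ∈ L, P G) ∧ L.foldr (· ∪ ·) ∅ = F

/-- Membership in `S₂`. -/
def MemS2 (F : Finset ℕ) : Prop :=
  F = ∅ ∨ ∃ h : F.Nonempty, Combine IsSchreier (F.min' h) F

/-- Membership in `S₃`. -/
def MemS3 (F : Finset ℕ) : Prop :=
  F = ∅ ∨ ∃ h : F.Nonempty, Combine MemS2 (F.min' h) F

/-- `F` is a maximal member of the family `P` (among sets of positive integers). -/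
def IsFull (P : Finset ℕ → Prop) (F : Finset ℕ) : Prop :=
  P F ∧ ∀ n : ℕ, 0 < n → n ∉ F → ¬ P (insert n F)

/-- `F ∈ full_{a,b}(P)`. -/
def FullAB (P : Finset ℕ → Prop) (a b : ℕ) (F : Finset ℕ) : Prop :=
  P F ∧ F ⊆ Finset.Icc a b ∧ a ∈ F ∧
    ∀ n ∈ Finset.Icc a b, n ∉ F → ¬ P (insert n F)

/-- The tower function `τ`. -/
def tau : ℕ → ℕ → ℕ
  | 0, a => a
  | i + 1, a => 2 ^ tau i a

/-- `E₁(F)`: `F` itself if `|F| ≤ min F`, otherwise the `min F` smallest elements of `F`. -/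
def E1 (F : Finset ℕ) : Finset ℕ :=
  if h : F.Nonempty then ((F.sort (· ≤ ·)).take (F.min' h)).toFinset else ∅

/-- Union of the first `i` greedy pieces. -/
def Eacc : ℕ → Finset ℕ → Finset ℕ
  | 0, _ => ∅
  | i + 1, F => Eacc i F ∪ E1 (F \ Eacc i F)

/-- The `i`-th greedy piece `E_i(F)` (for `i ≥ 1`). -/
def Epiece (i : ℕ) (F : Finset ℕ) : Finset ℕ := E1 (F \ Eacc (i - 1) F)

open Classical in
/-- `E₁*(F)`: `F` itself if `F ∈ S₂`, otherwise `E₁(F) ∪ ⋯ ∪ E_{min F}(F)`. -/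
noncomputable def E1star (F : Finset ℕ) : Finset ℕ :=
  if MemS2 F then F
  else if h : F.Nonempty then Eacc (F.min' h) F else ∅

/-- Union of the first `i` starred greedy pieces. -/
noncomputable def EaccStar : ℕ → Finset ℕ → Finset ℕ
  | 0, _ => ∅
  | i + 1, F => EaccStar i F ∪ E1star (F \ EaccStar i F)

/-- The `i`-th starred greedy piece `E_i*(F)` (for `i ≥ 1`). -/
noncomputable def EpieceStar (i : ℕ) (F : Finset ℕ) : Finset ℕ :=
  E1star (F \ EaccStar (i - 1) F)

/-!
`E₁(F)` is the longest initial segment of `F` in `S₁`, so it contains the first piece of any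
decomposition `F₁ < ⋯ < F_d` of `F` into `S₁`-sets, and `F \ E₁(F)` is covered by the remaining
`d - 1` pieces. Since greedy on `F` is `E₁(F)` followed by greedy on `F \ E₁(F)`, induction shows
that `d` greedy steps exhaust `F`. Conversely the greedy pieces are successive `S₁`-sets, so if
`E_{min F + 1}(F) = ∅` they witness `F ∈ S₂`.
-/

section ListLemmas

variable {α : Type*}

lemma List.mem_foldr_union [DecidableEq α] (L : List (Finset α)) (x : α) :
    x ∈ L.foldr (· ∪ ·) ∅ ↔ ∃ G ∈ L, x ∈ G := by
  induction L with
  | nil => simp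
  | cons a t ih => simp [ih]

lemma List.mem_take_iff_length_filter_lt [LinearOrder α] {l : List α}
    (hl : l.Pairwise (· < ·)) (k : ℕ) (x : α) :
    x ∈ l.take k ↔ x ∈ l ∧ (l.filter (· < x)).length < k := by
  induction l generalizing k with
  | nil => simp
  | cons a t ih =>
    rcases k with _ | k
    · simp
    rw [List.pairwise_cons] at hl
    by_cases hxa : x = a
    · subst hxa
      have hnil : t.filter (· < x) = [] :=
        List.filter_eq_nil_iff.mpr fun y hy => by simpa using (hl.1 y hy).le
      simp [hnil]
    · simp only [List.take_succ_cons, List.mem_cons, List.filter_cons, ih hl.2]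
      by_cases hax : a < x
      · simp [hax, hxa]
      · have hxt : x ∉ t := fun hx => hax (hl.1 x hx)
        simp [hax, hxa, hxt]

lemma Finset.length_filter_sort [LinearOrder α] (F : Finset α) (p : α → Prop)
    [DecidablePred p] : ((F.sort (· ≤ ·)).filter p).length = (F.filter p).card := by
  rw [((F.sort_perm_toList (· ≤ ·)).filter p).length_eq]
  have hval : (↑(F.toList.filter p) : Multiset α) = (F.filter p).val := by
    rw [← Multiset.filter_coe, Finset.toList, Multiset.coe_toList, Finset.filter_val]
  simpa [Finset.card_def] using congrArg Multiset.card hval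

end ListLemmas

section E1

lemma mem_E1 {F : Finset ℕ} (h : F.Nonempty) {x : ℕ} :
    x ∈ E1 F ↔ x ∈ F ∧ (F.filter (· < x)).card < F.min' h := by
  rw [E1, dif_pos h, List.mem_toFinset,
    List.mem_take_iff_length_filter_lt (List.sortedLT_iff_pairwise.mp F.sortedLT_sort),
    Finset.mem_sort, Finset.length_filter_sort]

lemma E1_subset (F : Finset ℕ) : E1 F ⊆ F := by
  intro x hx
  rcases F.eq_empty_or_nonempty with rfl | h
  · simp [E1] at hx
  · exact ((mem_E1 h).mp hx).1

lemma E1_card_le {F : Finset ℕ} (h : F.Nonempty) : (E1 F).card ≤ F.min' h := by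
  rw [E1, dif_pos h]
  calc _ ≤ ((F.sort (· ≤ ·)).take (F.min' h)).length := List.toFinset_card_le _
    _ ≤ F.min' h := List.length_take_le _ _

lemma isSchreier_E1 {F : Finset ℕ} (hpos : ∀ n ∈ F, 0 < n) : IsSchreier (E1 F) := by
  intro n hn
  have hnF : n ∈ F := E1_subset F hn
  exact ⟨hpos n hnF, (E1_card_le ⟨n, hnF⟩).trans (F.min'_le n hnF)⟩

lemma E1_eq_empty_iff {F : Finset ℕ} (hpos : ∀ n ∈ F, 0 < n) : E1 F = ∅ ↔ F = ∅ := by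
  refine ⟨fun hE => ?_, fun hF => by simp [hF, E1]⟩
  by_contra hF
  have h := Finset.nonempty_iff_ne_empty.mpr hF
  have hmin : F.min' h ∈ E1 F := by
    rw [mem_E1 h, Finset.filter_eq_empty_iff.mpr fun y hy => not_lt.mpr (F.min'_le y hy)]
    exact ⟨F.min'_mem h, hpos _ (F.min'_mem h)⟩
  simp [hE] at hmin

lemma lt_of_mem_E1_of_notMem {F : Finset ℕ} {x y : ℕ} (hx : x ∈ E1 F) (hy : y ∈ F)
    (hy' : y ∉ E1 F) : x < y := by
  have h : F.Nonempty := ⟨y, hy⟩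
  rw [mem_E1 h] at hx hy'
  by_contra! hyx
  refine hy' ⟨hy, lt_of_le_of_lt (Finset.card_le_card fun z hz => ?_) hx.2⟩
  simp only [Finset.mem_filter] at hz ⊢
  exact ⟨hz.1, hz.2.trans_le hyx⟩

lemma IsSchreier.subset_E1 {F G : Finset ℕ} (hG : IsSchreier G) (hGF : G ⊆ F)
    (hinit : ∀ x ∈ G, ∀ y ∈ F, y ≤ x → y ∈ G) : G ⊆ E1 F := by
  intro x hx
  have h : F.Nonempty := ⟨x, hGF hx⟩
  have hmin : F.min' h ∈ G := hinit x hx _ (F.min'_mem h) (F.min'_le x (hGF hx))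
  rw [mem_E1 h]
  refine ⟨hGF hx, ?_⟩
  have hsub : F.filter (· < x) ⊆ G.erase x := fun y hy => by
    rw [Finset.mem_filter] at hy
    exact Finset.mem_erase.mpr ⟨hy.2.ne, hinit x hx y hy.1 hy.2.le⟩
  calc (F.filter (· < x)).card ≤ (G.erase x).card := Finset.card_le_card hsub
    _ < G.card := Finset.card_erase_lt_of_mem hx
    _ ≤ F.min' h := (hG _ hmin).2

end E1

lemma IsSchreier.mono {G H : Finset ℕ} (hG : IsSchreier G) (hHG : H ⊆ G) : IsSchreier H :=
  fun n hn => ⟨(hG n (hHG hn)).1, (Finset.card_le_card hHG).trans (hG n (hHG hn)).2⟩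

section Combine

variable {P : Finset ℕ → Prop}

lemma combine_empty (P : Finset ℕ → Prop) (d : ℕ) : Combine P d ∅ :=
  ⟨[], by simp⟩

lemma combine_zero_iff {F : Finset ℕ} : Combine P 0 F ↔ F = ∅ := by
  refine ⟨fun ⟨L, hlen, _, _, hL⟩ => ?_, fun hF => hF ▸ combine_empty P 0⟩
  rw [List.eq_nil_of_length_eq_zero (Nat.le_zero.mp hlen)] at hL
  exact hL.symm

lemma combine_succ_iff {d : ℕ} {F : Finset ℕ} :
    Combine P (d + 1) F ↔
      F = ∅ ∨ ∃ G H, P G ∧ FinsetLT G H ∧ Combine P d H ∧ F = G ∪ H := by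
  constructor
  · rintro ⟨_ | ⟨G, L⟩, hlen, hpw, hP, rfl⟩
    · exact Or.inl rfl
    rw [List.pairwise_cons] at hpw
    refine Or.inr ⟨G, L.foldr (· ∪ ·) ∅, hP G List.mem_cons_self, ?_,
      ⟨L, by simpa using hlen, hpw.2, fun G' hG' => hP G' (List.mem_cons_of_mem _ hG'), rfl⟩, rfl⟩
    intro x hx y hy
    obtain ⟨G', hG', hyG'⟩ := (List.mem_foldr_union L y).mp hy
    exact hpw.1 G' hG' x hx y hyG'
  · rintro (rfl | ⟨G, H, hG, hGH, ⟨L, hlen, hpw, hP, rfl⟩, rfl⟩)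
    · exact combine_empty P _
    refine ⟨G :: L, by simpa using hlen, List.pairwise_cons.mpr ⟨?_, hpw⟩, ?_, rfl⟩
    · exact fun G' hG' x hx y hy => hGH x hx y ((List.mem_foldr_union L y).mpr ⟨G', hG', hy⟩)
    · simpa [hG] using hP

lemma Combine.mono (hP : ∀ ⦃G H⦄, P G → H ⊆ G → P H) {d : ℕ} {F A : Finset ℕ}
    (hF : Combine P d F) (hAF : A ⊆ F) : Combine P d A := by
  obtain ⟨L, hlen, hpw, hPL, rfl⟩ := hF
  refine ⟨L.map (· ∩ A), by simpa using hlen, ?_, ?_, ?_⟩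
  · exact List.pairwise_map.mpr <| hpw.imp fun hGH x hx y hy =>
      hGH x (Finset.mem_inter.mp hx).1 y (Finset.mem_inter.mp hy).1
  · simp only [List.mem_map]
    rintro _ ⟨G, hG, rfl⟩
    exact hP (hPL G hG) Finset.inter_subset_left
  · ext x
    simp only [List.mem_foldr_union, List.mem_map, exists_exists_and_eq_and, Finset.mem_inter]
    refine ⟨fun ⟨_, _, _, hxA⟩ => hxA, fun hxA => ?_⟩
    obtain ⟨G, hG, hxG⟩ := (List.mem_foldr_union L x).mp (hAF hxA)
    exact ⟨G, hG, hxG, hxA⟩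

end Combine

lemma memS2_iff_combine {F : Finset ℕ} (h : F.Nonempty) :
    MemS2 F ↔ Combine IsSchreier (F.min' h) F := by
  simp [MemS2, h.ne_empty, h]

section Eacc

lemma Eacc_subset (i : ℕ) (F : Finset ℕ) : Eacc i F ⊆ F := by
  induction i with
  | zero => simp [Eacc]
  | succ i ih => exact Finset.union_subset ih ((E1_subset _).trans Finset.sdiff_subset)

lemma Eacc_succ_eq_E1_union (i : ℕ) (F : Finset ℕ) :
    Eacc (i + 1) F = E1 F ∪ Eacc i (F \ E1 F) := by
  induction i with
  | zero => simp [Eacc]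
  | succ i ih => rw [Eacc, ih, Eacc, Finset.sdiff_sdiff_left', ← Finset.sdiff_union_distrib, Finset.union_assoc]

lemma combine_isSchreier_Eacc (i : ℕ) {F : Finset ℕ} (hpos : ∀ n ∈ F, 0 < n) :
    Combine IsSchreier i (Eacc i F) := by
  induction i generalizing F with
  | zero => exact combine_empty _ _
  | succ i ih =>
    rw [Eacc_succ_eq_E1_union]
    refine combine_succ_iff.mpr <| Or.inr ⟨_, _, isSchreier_E1 hpos, ?_,
      ih fun n hn => hpos n (Finset.mem_sdiff.mp hn).1, rfl⟩
    intro x hx y hy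
    have hy' := Finset.mem_sdiff.mp (Eacc_subset i _ hy)
    exact lt_of_mem_E1_of_notMem hx hy'.1 hy'.2

lemma subset_Eacc_of_combine {i : ℕ} {F : Finset ℕ} (hF : Combine IsSchreier i F) :
    F ⊆ Eacc i F := by
  induction i generalizing F with
  | zero => simp [combine_zero_iff.mp hF]
  | succ i ih =>
    rcases combine_succ_iff.mp hF with rfl | ⟨G, H, hG, hGH, hH, rfl⟩
    · exact Finset.empty_subset _
    have hGE : G ⊆ E1 (G ∪ H) := hG.subset_E1 Finset.subset_union_left
      fun x hx y hy hyx => (Finset.mem_union.mp hy).resolve_right fun hyH =>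
        (hGH x hx y hyH).not_ge hyx
    have hrest : (G ∪ H) \ E1 (G ∪ H) ⊆ H := fun x hx =>
      (Finset.mem_union.mp (Finset.mem_sdiff.mp hx).1).resolve_left
        fun hxG => (Finset.mem_sdiff.mp hx).2 (hGE hxG)
    have hrestE := ih (hH.mono (fun _ _ => IsSchreier.mono) hrest)
    intro x hx
    rw [Eacc_succ_eq_E1_union, Finset.mem_union]
    by_cases hxE : x ∈ E1 (G ∪ H)
    · exact Or.inl hxE
    · exact Or.inr (hrestE (Finset.mem_sdiff.mpr ⟨hx, hxE⟩))

lemma combine_isSchreier_iff_subset_Eacc {i : ℕ} {F : Finset ℕ} (hpos : ∀ n ∈ F, 0 < n) :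
    Combine IsSchreier i F ↔ F ⊆ Eacc i F :=
  ⟨subset_Eacc_of_combine, fun hF =>
    (Eacc_subset i F).antisymm hF ▸ combine_isSchreier_Eacc i hpos⟩

end Eacc

theorem stmt12 (F : Finset ℕ) (hpos : ∀ n ∈ F, 0 < n) (h : F.Nonempty) :
    MemS2 F ↔ Epiece (F.min' h + 1) F = ∅ := by
  have hrest : ∀ n ∈ F \ Eacc (F.min' h) F, 0 < n := fun n hn => hpos n (Finset.mem_sdiff.mp hn).1
  rw [memS2_iff_combine h, combine_isSchreier_iff_subset_Eacc hpos, Epiece, Nat.add_sub_cancel,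
    E1_eq_empty_iff hrest, Finset.sdiff_eq_empty_iff_subset]
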